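/- arXiv:2602.09144 — 8 statements merged into one kernel-verified Lean document; each statement's English description precedes it below -/
import Mathlib

section
/- Let n ∈ ℝ, q̇₀ ∈ ℝ, ρ₀ = q̇₀/√(n²+4), Ω₁ = (√(n²+4) + n)/2, Ω₂ = (√(n²+4) − n)/2, and define q(t) = ρ₀(sin(Ω₁ t) + sin(Ω₂ t)) and q̇(t) = ρ₀(Ω₁ cos(Ω₁ t) + Ω₂ cos(Ω₂ t)). Then for all t ∈ ℝ one has q(t)² + q̇(t)² ≤ q̇₀². -/
open Real

/-- Energy bound on the projected impulse response: `q(t)² + q̇(t)² ≤ q̇₀²`. -/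
theorem gyroscopic_projected_energy_bound
    (n qdot₀ : ℝ)
    (ρ₀ Ω₁ Ω₂ : ℝ)
    (hρ₀ : ρ₀ = qdot₀ / Real.sqrt (n^2 + 4))
    (hΩ₁ : Ω₁ = (Real.sqrt (n^2 + 4) + n) / 2)
    (hΩ₂ : Ω₂ = (Real.sqrt (n^2 + 4) - n) / 2) :
    ∀ t : ℝ,
      (ρ₀ * (Real.sin (Ω₁ * t) + Real.sin (Ω₂ * t)))^2
        + (ρ₀ * (Ω₁ * Real.cos (Ω₁ * t) + Ω₂ * Real.cos (Ω₂ * t)))^2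
      ≤ qdot₀^2 := by
  intro t
  have h4 : (0:ℝ) < n^2 + 4 := by positivity
  have hs : Real.sqrt (n^2 + 4) ^ 2 = n^2 + 4 := Real.sq_sqrt h4.le
  have hΩmul : Ω₁ * Ω₂ = 1 := by rw [hΩ₁, hΩ₂]; nlinarith [hs]
  have hΩsq : Ω₁^2 + Ω₂^2 = n^2 + 2 := by rw [hΩ₁, hΩ₂]; nlinarith [hs]
  have hρ : ρ₀^2 * (n^2 + 4) = qdot₀^2 := by
    rw [hρ₀, div_pow, hs]
    field_simp
  set a := Ω₁ * t
  set b := Ω₂ * t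
  have p1 : Real.sin a ^ 2 + Real.cos a ^ 2 = 1 := Real.sin_sq_add_cos_sq a
  have p2 : Real.sin b ^ 2 + Real.cos b ^ 2 = 1 := Real.sin_sq_add_cos_sq b
  have key : (ρ₀ * (Real.sin a + Real.sin b))^2
      + (ρ₀ * (Ω₁ * Real.cos a + Ω₂ * Real.cos b))^2
      + (ρ₀ * (Real.cos b - Real.cos a))^2
      + (ρ₀ * (Ω₁ * Real.sin a - Ω₂ * Real.sin b))^2 = qdot₀^2 := by
    linear_combination ρ₀^2 * (1 + Ω₁^2) * p1 + ρ₀^2 * (1 + Ω₂^2) * p2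
      + 2 * ρ₀^2 * (Real.cos a * Real.cos b - Real.sin a * Real.sin b) * hΩmul
      + ρ₀^2 * hΩsq + hρ
  nlinarith [sq_nonneg (ρ₀ * (Real.cos b - Real.cos a)),
    sq_nonneg (ρ₀ * (Ω₁ * Real.sin a - Ω₂ * Real.sin b)), key]
end

section
/- Let ω₁, ω₂ > 0. For ω > 0 let C_ω = {(sin θ, ω·cos θ) : θ ∈ ℝ} be the ellipse boundary and E_ω = {(x, y) ∈ ℝ² : x² + (y/ω)² ≤ 1} the filled ellipse. Then the convex hull of the pointwise Minkowski sum C_{ω₁} + C_{ω₂} = {a + b : a ∈ C_{ω₁}, b ∈ C_{ω₂}} equals the Minkowski sum of the filled ellipses: conv(C_{ω₁} + C_{ω₂}) = E_{ω₁} + E_{ω₂}. -/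
open Real Pointwise

lemma conv_ellipse_aux (ω : ℝ) (hω : 0 < ω) :
    convexHull ℝ {p : ℝ × ℝ | ∃ θ : ℝ, p = (Real.sin θ, ω * Real.cos θ)}
      = {p : ℝ × ℝ | p.1^2 + (p.2 / ω)^2 ≤ 1} := by
  have hω' : ω ≠ 0 := hω.ne'
  apply le_antisymm
  · apply convexHull_min
    · rintro p ⟨θ, rfl⟩
      simp only [Set.mem_setOf_eq]
      rw [mul_div_cancel_left₀ _ hω']
      nlinarith [sin_sq_add_cos_sq θ]
    · rintro ⟨x₁, y₁⟩ hp ⟨x₂, y₂⟩ hq a b ha hb hab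
      simp only [Set.mem_setOf_eq, Prod.smul_mk, Prod.mk_add_mk, smul_eq_mul] at *
      have key : (a * y₁ + b * y₂) / ω = a * (y₁ / ω) + b * (y₂ / ω) := by ring
      rw [key]
      set u₁ := y₁ / ω with hu₁
      set u₂ := y₂ / ω with hu₂
      clear_value u₁ u₂
      nlinarith [mul_nonneg (mul_nonneg ha hb) (sq_nonneg (x₁ - x₂)),
        mul_nonneg (mul_nonneg ha hb) (sq_nonneg (u₁ - u₂)),
        mul_le_mul_of_nonneg_left hp ha, mul_le_mul_of_nonneg_left hq hb]
  · rintro ⟨x, y⟩ hp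
    simp only [Set.mem_setOf_eq] at hp
    set s := Real.sqrt (1 - x ^ 2) with hs
    have hx2 : x ^ 2 ≤ 1 := by nlinarith [sq_nonneg (y / ω)]
    have hs2 : s ^ 2 = 1 - x ^ 2 := Real.sq_sqrt (by linarith)
    have hsnn : 0 ≤ s := Real.sqrt_nonneg _
    have hx1 : -1 ≤ x := by nlinarith
    have hx1' : x ≤ 1 := by nlinarith
    have hsinθ : Real.sin (Real.arcsin x) = x := Real.sin_arcsin hx1 hx1'
    have hcosθ : Real.cos (Real.arcsin x) = s := by
      rw [Real.cos_arcsin, hs]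
    rcases eq_or_lt_of_le hsnn with h0 | hspos
    · -- s = 0 : boundary point
      have hy : y = 0 := by
        have : (y / ω) ^ 2 ≤ 0 := by nlinarith
        have h2 := pow_eq_zero_iff (n := 2) (by norm_num) |>.mp (le_antisymm this (sq_nonneg _))
        have := div_eq_zero_iff.mp h2
        tauto
      apply subset_convexHull
      exact ⟨Real.arcsin x, by rw [hsinθ, hcosθ, ← h0, hy, mul_zero]⟩
    · -- interior-ish: combination of (x, ω s) and (x, -(ω s))
      have hyb : (y / ω) ^ 2 ≤ s ^ 2 := by nlinarith
      have hyle : y / ω ≤ s := by nlinarith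
      have hyge : -s ≤ y / ω := by nlinarith
      set t := (y / ω + s) / (2 * s) with ht
      have ht0 : 0 ≤ t := div_nonneg (by linarith) (by linarith)
      have ht1 : t ≤ 1 := by
        rw [ht, div_le_one (by linarith)]
        linarith
      have hP1 : ((x, ω * s) : ℝ × ℝ) ∈
          {p : ℝ × ℝ | ∃ θ : ℝ, p = (Real.sin θ, ω * Real.cos θ)} :=
        ⟨Real.arcsin x, by rw [hsinθ, hcosθ]⟩
      have hP2 : ((x, -(ω * s)) : ℝ × ℝ) ∈
          {p : ℝ × ℝ | ∃ θ : ℝ, p = (Real.sin θ, ω * Real.cos θ)} := by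
        refine ⟨Real.pi - Real.arcsin x, ?_⟩
        rw [Real.sin_pi_sub, Real.cos_pi_sub, hsinθ, hcosθ, mul_neg]
      have := (convex_convexHull ℝ {p : ℝ × ℝ | ∃ θ : ℝ, p = (Real.sin θ, ω * Real.cos θ)})
        (subset_convexHull ℝ _ hP1) (subset_convexHull ℝ _ hP2) ht0 (by linarith : (0:ℝ) ≤ 1 - t)
        (by ring)
      convert this using 1
      simp only [Prod.smul_mk, Prod.mk_add_mk, smul_eq_mul]
      have hxeq : x = t * x + (1 - t) * x := by ring
      have hyeq : y = t * (ω * s) + (1 - t) * -(ω * s) := by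
        rw [ht]
        field_simp
        ring
      exact congrArg₂ Prod.mk hxeq hyeq

/-- The convex hull of the Minkowski sum of two ellipse boundaries equals
the Minkowski sum of the corresponding filled ellipses. -/
theorem convexHull_minkowski_sum_ellipse_boundaries
    (ω₁ ω₂ : ℝ) (hω₁ : 0 < ω₁) (hω₂ : 0 < ω₂) :
    convexHull ℝ
        ({p : ℝ × ℝ | ∃ θ : ℝ, p = (Real.sin θ, ω₁ * Real.cos θ)} +
         {p : ℝ × ℝ | ∃ θ : ℝ, p = (Real.sin θ, ω₂ * Real.cos θ)})
      = {p : ℝ × ℝ | p.1^2 + (p.2 / ω₁)^2 ≤ 1} +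
        {p : ℝ × ℝ | p.1^2 + (p.2 / ω₂)^2 ≤ 1} := by
  rw [convexHull_add, conv_ellipse_aux ω₁ hω₁, conv_ellipse_aux ω₂ hω₂]
end

section
/- Let n ∈ ℝ, ρ₀ > 0, Ω₁ = (√(n²+4) + n)/2, Ω₂ = (√(n²+4) − n)/2, and let S = {ρ₀·(a + b) : a ∈ C_{Ω₁}, b ∈ C_{Ω₂}} where C_ω = {(sin θ, ω·cos θ) : θ ∈ ℝ}. Then for every φ ∈ ℝ, sup{p₁·cos φ + p₂·sin φ : (p₁, p₂) ∈ S} = ρ₀·(√(cos²φ + Ω₁²·sin²φ) + √(cos²φ + Ω₂²·sin²φ)). -/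
open Real

lemma exists_sin_cos (x y : ℝ) (h : x^2 + y^2 = 1) :
    ∃ θ : ℝ, Real.sin θ = x ∧ Real.cos θ = y := by
  have hy1 : -1 ≤ y := by nlinarith [sq_nonneg x]
  have hy2 : y ≤ 1 := by nlinarith [sq_nonneg x]
  have hc : Real.cos (Real.arccos y) = y := Real.cos_arccos hy1 hy2
  have hs : Real.sin (Real.arccos y) = Real.sqrt (1 - y^2) := Real.sin_arccos y
  have hxx : Real.sqrt (1 - y^2) = |x| := by
    have : (1 : ℝ) - y^2 = x^2 := by linarith
    rw [this, Real.sqrt_sq_eq_abs]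
  rcases le_or_gt 0 x with hx | hx
  · exact ⟨Real.arccos y, by rw [hs, hxx, abs_of_nonneg hx], hc⟩
  · refine ⟨-Real.arccos y, ?_, by rw [Real.cos_neg, hc]⟩
    rw [Real.sin_neg, hs, hxx, abs_of_neg hx, neg_neg]

lemma isGreatest_lin (A B : ℝ) :
    IsGreatest {r : ℝ | ∃ θ : ℝ, r = A * Real.sin θ + B * Real.cos θ}
      (Real.sqrt (A^2 + B^2)) := by
  set s := Real.sqrt (A^2 + B^2) with hsdef
  have hs0 : 0 ≤ s := Real.sqrt_nonneg _
  have hs2 : s^2 = A^2 + B^2 := Real.sq_sqrt (by positivity)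
  constructor
  · rcases eq_or_lt_of_le hs0 with h | h
    · refine ⟨0, ?_⟩
      have hA : A = 0 := by nlinarith
      have hB : B = 0 := by nlinarith
      simp [hA, hB, ← h]
    · obtain ⟨θ, hθs, hθc⟩ := exists_sin_cos (A / s) (B / s) (by
        field_simp
        nlinarith)
      refine ⟨θ, ?_⟩
      rw [hθs, hθc]
      field_simp
      nlinarith
  · rintro r ⟨θ, rfl⟩
    have h1 := Real.sin_sq_add_cos_sq θ
    nlinarith [sq_nonneg (A * Real.cos θ - B * Real.sin θ),
      sq_nonneg (s - (A * Real.sin θ + B * Real.cos θ))]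

/-- Support function of the projected impulse-response set
`S = ρ₀ (C_{Ω₁} + C_{Ω₂})` in direction `(cos φ, sin φ)`. -/
theorem projected_set_support_function
    (n ρ₀ : ℝ) (hρ₀ : 0 < ρ₀)
    (Ω₁ Ω₂ : ℝ)
    (hΩ₁ : Ω₁ = (Real.sqrt (n^2 + 4) + n) / 2)
    (hΩ₂ : Ω₂ = (Real.sqrt (n^2 + 4) - n) / 2)
    (S : Set (ℝ × ℝ))
    (hS : S = {p : ℝ × ℝ | ∃ a b : ℝ × ℝ,
        (∃ θ : ℝ, a = (Real.sin θ, Ω₁ * Real.cos θ)) ∧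
        (∃ θ : ℝ, b = (Real.sin θ, Ω₂ * Real.cos θ)) ∧
        p = ρ₀ • (a + b)}) :
    ∀ φ : ℝ,
      sSup {r : ℝ | ∃ p ∈ S, r = p.1 * Real.cos φ + p.2 * Real.sin φ}
        = ρ₀ * (Real.sqrt (Real.cos φ ^ 2 + Ω₁^2 * Real.sin φ ^ 2)
              + Real.sqrt (Real.cos φ ^ 2 + Ω₂^2 * Real.sin φ ^ 2)) := by
  intro φ
  set A := Real.cos φ
  set B := Real.sin φ
  have h1 := isGreatest_lin A (Ω₁ * B)
  have h2 := isGreatest_lin A (Ω₂ * B)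
  have e1 : Real.sqrt (A^2 + (Ω₁*B)^2) = Real.sqrt (A ^ 2 + Ω₁^2 * B ^ 2) := by
    congr 1; ring
  have e2 : Real.sqrt (A^2 + (Ω₂*B)^2) = Real.sqrt (A ^ 2 + Ω₂^2 * B ^ 2) := by
    congr 1; ring
  apply IsGreatest.csSup_eq
  constructor
  · obtain ⟨θ₁, hθ₁⟩ := h1.1
    obtain ⟨θ₂, hθ₂⟩ := h2.1
    refine ⟨(ρ₀ * (Real.sin θ₁ + Real.sin θ₂),
      ρ₀ * (Ω₁ * Real.cos θ₁ + Ω₂ * Real.cos θ₂)), ?_, ?_⟩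
    · rw [hS]
      exact ⟨(Real.sin θ₁, Ω₁ * Real.cos θ₁), (Real.sin θ₂, Ω₂ * Real.cos θ₂),
        ⟨θ₁, rfl⟩, ⟨θ₂, rfl⟩, by simp only [Prod.mk_add_mk, Prod.smul_mk, smul_eq_mul, mul_add]⟩
    · simp only
      rw [← e1, ← e2, hθ₁, hθ₂]
      ring
  · rintro r ⟨p, hp, rfl⟩
    rw [hS] at hp
    obtain ⟨a, b, ⟨θ₁, rfl⟩, ⟨θ₂, rfl⟩, rfl⟩ := hp
    have u1 : A * Real.sin θ₁ + (Ω₁*B) * Real.cos θ₁ ≤ Real.sqrt (A^2 + (Ω₁*B)^2) :=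
      h1.2 ⟨θ₁, rfl⟩
    have u2 : A * Real.sin θ₂ + (Ω₂*B) * Real.cos θ₂ ≤ Real.sqrt (A^2 + (Ω₂*B)^2) :=
      h2.2 ⟨θ₂, rfl⟩
    rw [← e1, ← e2]
    simp only [Prod.smul_fst, Prod.smul_snd, Prod.fst_add, Prod.snd_add, smul_eq_mul]
    nlinarith [hρ₀.le]
end

section
/- Let τ > σ ≥ 1 be coprime natural numbers and ρ₀ ≠ 0 a real number. Define q(θ) = ρ₀(sin(τθ) + sin(σθ)), q̇(θ) = ρ₀(√(τ/σ)·cos(τθ) + √(σ/τ)·cos(σθ)) and R(θ) = q(θ)² + q̇(θ)². Then there exists θ ∈ ℝ with R(θ) = 0 if and only if τ − σ ≡ 2 (mod 4). -/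
open Real

lemma sin_odd_half (k : ℤ) : Real.sin ((2*k+1)*π/2) = (-1)^k := by
  have : (2*(k:ℝ)+1)*π/2 = k*π + π/2 := by ring
  rw [this, Real.sin_add_pi_div_two]
  have := Real.cos_int_mul_pi_sub 0 k
  simpa using this

lemma key_arith (τ σ : ℕ) (hσ : 1 ≤ σ) (hτσ : σ < τ) (hcop : Nat.Coprime τ σ)
    (k m : ℤ) (hodd : Odd (k+m)) (heq : (2*k+1)*(σ:ℤ) = (2*m+1)*(τ:ℤ)) :
    (τ - σ) % 4 = 2 := by
  have hcz : IsCoprime (τ:ℤ) (σ:ℤ) := by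
    rw [Int.isCoprime_iff_gcd_eq_one]; exact_mod_cast hcop
  have hdvd : (τ:ℤ) ∣ (2*k+1) :=
    hcz.dvd_of_dvd_mul_right ⟨2*m+1, by linarith [heq]⟩
  obtain ⟨t, ht⟩ := hdvd
  have hτ0 : (τ:ℤ) ≠ 0 := by omega
  have hv : 2*m+1 = t*(σ:ℤ) := by
    have : (2*m+1)*(τ:ℤ) = (t*σ)*τ := by rw [← heq, ht]; ring
    exact mul_right_cancel₀ hτ0 this
  have hu_odd : Odd ((τ:ℤ)*t) := ht ▸ ⟨k, by ring⟩
  have hv_odd : Odd (t*(σ:ℤ)) := hv ▸ ⟨m, by ring⟩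
  rw [Int.odd_mul] at hu_odd hv_odd
  obtain ⟨hτodd, htodd⟩ := hu_odd
  obtain ⟨-, hσodd⟩ := hv_odd
  obtain ⟨j, hj⟩ := hodd
  have hsum : t * ((τ:ℤ)+σ) = 4*(j+1) := by
    have h2 : (2*k+1) + (2*m+1) = t*((τ:ℤ)+σ) := by rw [ht, hv]; ring
    omega
  have h4 : (4:ℤ) ∣ (τ:ℤ)+σ := by
    obtain ⟨a, ha⟩ : (2:ℤ) ∣ (τ:ℤ)+σ := by
      obtain ⟨x, hx⟩ := hτodd; obtain ⟨y, hy⟩ := hσodd; exact ⟨x+y+1, by omega⟩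
    have hta : t * a = 2*(j+1) := by rw [ha] at hsum; linarith
    have hea : Even a := by
      have hev : Even (t*a) := ⟨j+1, by omega⟩
      rcases Int.even_mul.mp hev with h | h
      · exact absurd h (Int.not_even_iff_odd.mpr htodd)
      · exact h
    obtain ⟨b, hb⟩ := hea
    exact ⟨b, by omega⟩
  obtain ⟨w, hw⟩ := h4
  obtain ⟨x, hx⟩ := hτodd; obtain ⟨y, hy⟩ := hσodd
  omega

/-- Degeneracy of the resonant inscribed circle: the squared radius of the
resonant Lissajous curve vanishes somewhere iff `τ − σ ≡ 2 (mod 4)`. -/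
theorem resonant_inscribed_radius_degenerate_iff
    (τ σ : ℕ) (hσ : 1 ≤ σ) (hτσ : σ < τ) (hcop : Nat.Coprime τ σ)
    (ρ₀ : ℝ) (hρ₀ : ρ₀ ≠ 0) :
    (∃ θ : ℝ,
        (ρ₀ * (Real.sin (τ * θ) + Real.sin (σ * θ)))^2
          + (ρ₀ * (Real.sqrt ((τ : ℝ) / σ) * Real.cos (τ * θ)
              + Real.sqrt ((σ : ℝ) / τ) * Real.cos (σ * θ)))^2 = 0)
      ↔ (τ - σ) % 4 = 2 := by
  have hS : (0:ℝ) < σ := by exact_mod_cast hσ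
  have hτpos : 0 < τ := by omega
  have hT : (0:ℝ) < τ := by exact_mod_cast hτpos
  constructor
  · rintro ⟨θ, h⟩
    have hA2 : (ρ₀ * (Real.sin (τ * θ) + Real.sin (σ * θ)))^2 = 0 := by
      nlinarith [sq_nonneg (ρ₀ * (Real.sin (τ * θ) + Real.sin (σ * θ))),
        sq_nonneg (ρ₀ * (Real.sqrt ((τ : ℝ) / σ) * Real.cos (τ * θ)
              + Real.sqrt ((σ : ℝ) / τ) * Real.cos (σ * θ)))]
    have hB2 : (ρ₀ * (Real.sqrt ((τ : ℝ) / σ) * Real.cos (τ * θ)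
              + Real.sqrt ((σ : ℝ) / τ) * Real.cos (σ * θ)))^2 = 0 := by
      nlinarith [sq_nonneg (ρ₀ * (Real.sin (τ * θ) + Real.sin (σ * θ))),
        sq_nonneg (ρ₀ * (Real.sqrt ((τ : ℝ) / σ) * Real.cos (τ * θ)
              + Real.sqrt ((σ : ℝ) / τ) * Real.cos (σ * θ)))]
    have hs : Real.sin (τ * θ) + Real.sin (σ * θ) = 0 :=
      (mul_eq_zero.mp (pow_eq_zero_iff two_ne_zero |>.mp hA2)).resolve_left hρ₀
    have hc : Real.sqrt ((τ : ℝ) / σ) * Real.cos (τ * θ)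
              + Real.sqrt ((σ : ℝ) / τ) * Real.cos (σ * θ) = 0 :=
      (mul_eq_zero.mp (pow_eq_zero_iff two_ne_zero |>.mp hB2)).resolve_left hρ₀
    have ha2 : Real.sqrt ((τ : ℝ) / σ) ^ 2 = (τ:ℝ)/σ :=
      Real.sq_sqrt (by positivity)
    have hb2 : Real.sqrt ((σ : ℝ) / τ) ^ 2 = (σ:ℝ)/τ :=
      Real.sq_sqrt (by positivity)
    have e1 := Real.sin_sq_add_cos_sq (τ * θ)
    have e2 := Real.sin_sq_add_cos_sq (σ * θ)
    have hsin : Real.sin (τ * θ) = - Real.sin (σ * θ) := by linarith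
    have hsq : Real.sin (τ * θ)^2 = Real.sin (σ * θ)^2 := by rw [hsin]; ring
    have hcsq : Real.cos (τ * θ)^2 = Real.cos (σ * θ)^2 := by linarith
    have hcc : Real.sqrt ((τ : ℝ) / σ) * Real.cos (τ * θ)
        = - (Real.sqrt ((σ : ℝ) / τ) * Real.cos (σ * θ)) := by linarith
    have hsq2 : ((τ:ℝ)/σ) * Real.cos (τ * θ)^2 = ((σ:ℝ)/τ) * Real.cos (σ * θ)^2 := by
      calc ((τ:ℝ)/σ) * Real.cos (τ * θ)^2
          = (Real.sqrt ((τ : ℝ) / σ) * Real.cos (τ * θ))^2 := by rw [mul_pow, ha2]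
        _ = (Real.sqrt ((σ : ℝ) / τ) * Real.cos (σ * θ))^2 := by rw [hcc]; ring
        _ = ((σ:ℝ)/τ) * Real.cos (σ * θ)^2 := by rw [mul_pow, hb2]
    have hmul : ((τ:ℝ)*τ) * Real.cos (τ * θ)^2 = ((σ:ℝ)*σ) * Real.cos (τ * θ)^2 := by
      rw [hcsq] at hsq2 ⊢
      field_simp at hsq2
      linarith
    have hST : (σ:ℝ) < (τ:ℝ) := by exact_mod_cast hτσ
    have hctsq : Real.cos (τ * θ)^2 = 0 := by
      by_contra hne
      have hpos : 0 < Real.cos (τ * θ)^2 :=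
        lt_of_le_of_ne (sq_nonneg _) (Ne.symm hne)
      have hfac : 0 < ((τ:ℝ)*τ - σ*σ) := by
        have := mul_lt_mul'' hST hST hS.le hS.le
        linarith
      have hzero : ((τ:ℝ)*τ - σ*σ) * Real.cos (τ * θ)^2 = 0 := by
        linear_combination hmul
      linarith [mul_pos hfac hpos]
    have hct : Real.cos (τ * θ) = 0 := pow_eq_zero_iff two_ne_zero |>.mp hctsq
    have hcs : Real.cos (σ * θ) = 0 := by
      have : Real.cos (σ * θ)^2 = 0 := by rw [← hcsq]; exact hctsq
      exact pow_eq_zero_iff two_ne_zero |>.mp this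
    obtain ⟨k, hk⟩ := Real.cos_eq_zero_iff.mp hct
    obtain ⟨m, hm⟩ := Real.cos_eq_zero_iff.mp hcs
    have hsτ : Real.sin (τ * θ) = (-1:ℝ)^k := by rw [hk]; exact sin_odd_half k
    have hsσ : Real.sin (σ * θ) = (-1:ℝ)^m := by rw [hm]; exact sin_odd_half m
    have hval : (-1:ℝ)^k + (-1:ℝ)^m = 0 := by rw [← hsτ, ← hsσ]; exact hs
    have hodd : Odd (k + m) := by
      by_contra hev
      rw [Int.not_odd_iff_even] at hev
      have h1 : (-1:ℝ)^k * (-1:ℝ)^m = 1 := by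
        rw [← zpow_add₀ (by norm_num : (-1:ℝ) ≠ 0)]
        exact Even.neg_one_zpow hev
      have h2 : (-1:ℝ)^m * (-1:ℝ)^m = 1 := by
        rw [← zpow_add₀ (by norm_num : (-1:ℝ) ≠ 0)]
        exact Even.neg_one_zpow ⟨m, rfl⟩
      have h3 : (-1:ℝ)^k = (-1:ℝ)^m :=
        mul_right_cancel₀ (zpow_ne_zero m (by norm_num : (-1:ℝ) ≠ 0)) (h1.trans h2.symm)
      have h4 : (-1:ℝ)^m ≠ 0 := zpow_ne_zero m (by norm_num)
      apply h4
      linarith [hval, h3]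
    have hπ2 : (0:ℝ) < π/2 := by positivity
    have hreq : ((2*k+1)*(σ:ℤ) : ℝ) * (π/2) = ((2*m+1)*(τ:ℤ) : ℝ) * (π/2) := by
      push_cast
      linear_combination (σ:ℝ) * hk.symm - (τ:ℝ) * hm.symm
    have hint : (2*k+1)*(σ:ℤ) = (2*m+1)*(τ:ℤ) := by
      have := mul_right_cancel₀ (ne_of_gt hπ2) hreq
      exact_mod_cast this
    exact key_arith τ σ hσ hτσ hcop k m hodd hint
  · intro h2
    have hgcd : Nat.gcd τ σ = 1 := hcop
    have hpar : τ % 2 = 1 ∧ σ % 2 = 1 := by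
      by_contra hcon
      have hd : 2 ∣ Nat.gcd τ σ := Nat.dvd_gcd (by omega) (by omega)
      omega
    obtain ⟨hτp, hσp⟩ := hpar
    refine ⟨π/2, ?_⟩
    obtain ⟨a, ha⟩ : ∃ a, τ = 2*a+1 := ⟨τ/2, by omega⟩
    obtain ⟨b, hb⟩ : ∃ b, σ = 2*b+1 := ⟨σ/2, by omega⟩
    have hτr : ((τ:ℝ)) * (π/2) = (2*((a : ℕ):ℤ)+1)*π/2 := by
      rw [ha]; push_cast; ring
    have hσr : ((σ:ℝ)) * (π/2) = (2*((b : ℕ):ℤ)+1)*π/2 := by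
      rw [hb]; push_cast; ring
    have hcτ : Real.cos (τ * (π/2)) = 0 :=
      Real.cos_eq_zero_iff.mpr ⟨((a : ℕ):ℤ), by rw [hτr]⟩
    have hcσ : Real.cos (σ * (π/2)) = 0 :=
      Real.cos_eq_zero_iff.mpr ⟨((b : ℕ):ℤ), by rw [hσr]⟩
    have hsτ : Real.sin (τ * (π/2)) = (-1:ℝ)^((a : ℕ):ℤ) := by
      rw [hτr]; exact sin_odd_half _
    have hsσ : Real.sin (σ * (π/2)) = (-1:ℝ)^((b : ℕ):ℤ) := by
      rw [hσr]; exact sin_odd_half _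
    have hoddab : Odd (a + b) := by
      rw [Nat.odd_iff]; omega
    have hval : (-1:ℝ)^((a : ℕ):ℤ) + (-1:ℝ)^((b : ℕ):ℤ) = 0 := by
      rw [zpow_natCast, zpow_natCast]
      rcases Nat.even_or_odd a with he | ho
      · have hob : Odd b := by
          rcases Nat.even_or_odd b with h | h
          · exact absurd (he.add h) (Nat.not_even_iff_odd.mpr hoddab)
          · exact h
        rw [he.neg_one_pow, hob.neg_one_pow]; ring
      · have heb : Even b := by
          rcases Nat.even_or_odd b with h | h
          · exact h
          · exact absurd (ho.add_odd h) (Nat.not_even_iff_odd.mpr hoddab)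
        rw [ho.neg_one_pow, heb.neg_one_pow]; ring
    rw [hcτ, hcσ, hsτ, hsσ, hval]
    ring
end

section
/- Let τ > σ ≥ 1 be natural numbers and ρ₀ ∈ ℝ. Define A = (τ + σ)/√(τσ), B = (σ − τ)/√(τσ), α(θ) = ((τ + σ)/2)·θ and β(θ) = ((τ − σ)/2)·θ, and let R(θ) = (ρ₀(sin(τθ) + sin(σθ)))² + (ρ₀(√(τ/σ)·cos(τθ) + √(σ/τ)·cos(σθ)))². Then for every θ ∈ ℝ, R(θ) ≥ ρ₀² · 4A²·cos⁴(β(θ)) / ((A² + 4)·cos²(β(θ)) + B²·sin²(β(θ))). -/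
open Real

set_option maxHeartbeats 1000000 in
/-- Rayleigh–Ritz lower bound on the squared radius of the resonant
Lissajous curve in terms of the slow phase `β(θ) = ((τ−σ)/2)θ`. -/
theorem resonant_lissajous_rayleigh_ritz_bound
    (τ σ : ℕ) (hσ : 1 ≤ σ) (hτσ : σ < τ) (ρ₀ : ℝ)
    (A B : ℝ)
    (hA : A = ((τ : ℝ) + σ) / Real.sqrt ((τ : ℝ) * σ))
    (hB : B = ((σ : ℝ) - τ) / Real.sqrt ((τ : ℝ) * σ)) :
    ∀ θ : ℝ,
      (ρ₀ * (Real.sin (τ * θ) + Real.sin (σ * θ)))^2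
        + (ρ₀ * (Real.sqrt ((τ : ℝ) / σ) * Real.cos (τ * θ)
            + Real.sqrt ((σ : ℝ) / τ) * Real.cos (σ * θ)))^2
      ≥ ρ₀^2 * (4 * A^2 * Real.cos ((((τ : ℝ) - σ) / 2) * θ) ^ 4) /
          ((A^2 + 4) * Real.cos ((((τ : ℝ) - σ) / 2) * θ) ^ 2
            + B^2 * Real.sin ((((τ : ℝ) - σ) / 2) * θ) ^ 2) := by
  intro θ
  have hσpos : (0:ℝ) < σ := by exact_mod_cast Nat.lt_of_lt_of_le Nat.zero_lt_one hσ
  have hτpos : (0:ℝ) < τ := by exact_mod_cast Nat.lt_of_le_of_lt (Nat.zero_le σ) hτσ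
  set st := Real.sqrt τ with hstdef
  set ss := Real.sqrt σ with hssdef
  have hstpos : 0 < st := Real.sqrt_pos.mpr hτpos
  have hsspos : 0 < ss := Real.sqrt_pos.mpr hσpos
  have hst2 : st ^ 2 = (τ:ℝ) := Real.sq_sqrt hτpos.le
  have hss2 : ss ^ 2 = (σ:ℝ) := Real.sq_sqrt hσpos.le
  have hmul : Real.sqrt ((τ:ℝ) * σ) = st * ss := Real.sqrt_mul hτpos.le σ
  have hdiv1 : Real.sqrt ((τ:ℝ) / σ) = st / ss := Real.sqrt_div hτpos.le σ
  have hdiv2 : Real.sqrt ((σ:ℝ) / τ) = ss / st := Real.sqrt_div hσpos.le τ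
  set α := (((τ:ℝ) + σ) / 2) * θ with hαdef
  set β := (((τ:ℝ) - σ) / 2) * θ with hβdef
  have hτθ : (τ:ℝ) * θ = α + β := by rw [hαdef, hβdef]; ring
  have hσθ : (σ:ℝ) * θ = α - β := by rw [hαdef, hβdef]; ring
  set x := Real.sin α with hxdef
  set y := Real.cos α with hydef
  set c := Real.cos β with hcdef
  set s := Real.sin β with hsdef
  have hxy : x ^ 2 + y ^ 2 = 1 := Real.sin_sq_add_cos_sq α
  have hcs : s ^ 2 + c ^ 2 = 1 := Real.sin_sq_add_cos_sq β
  have hAcoef : st / ss + ss / st = A := by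
    rw [hA, hmul, ← hst2, ← hss2]; field_simp
  have hBcoef : ss / st - st / ss = B := by
    rw [hB, hmul, ← hst2, ← hss2]; field_simp
  have hq : Real.sin ((τ:ℝ) * θ) + Real.sin ((σ:ℝ) * θ) = 2 * x * c := by
    rw [hτθ, hσθ, Real.sin_add, Real.sin_sub]; ring
  have hp : Real.sqrt ((τ:ℝ) / σ) * Real.cos ((τ:ℝ) * θ)
      + Real.sqrt ((σ:ℝ) / τ) * Real.cos ((σ:ℝ) * θ)
      = A * y * c + B * x * s := by
    rw [hdiv1, hdiv2, hτθ, hσθ, Real.cos_add, Real.cos_sub, ← hAcoef, ← hBcoef]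
    ring
  have hB2 : 0 < B ^ 2 := by
    have hBneg : B < 0 := by
      rw [hB, hmul]
      apply div_neg_of_neg_of_pos
      · have : (σ:ℝ) < τ := by exact_mod_cast hτσ
        linarith
      · exact mul_pos hstpos hsspos
    nlinarith [mul_pos_of_neg_of_neg hBneg hBneg]
  have hT : 0 < (A ^ 2 + 4) * c ^ 2 + B ^ 2 * s ^ 2 := by
    rcases eq_or_ne c 0 with hc | hc
    · have hs2 : s ^ 2 = 1 := by rw [hc] at hcs; simpa using hcs
      rw [hc, hs2]; simpa using hB2
    · have h1 : 0 < (A ^ 2 + 4) * c ^ 2 := by positivity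
      have h2 : 0 ≤ B ^ 2 * s ^ 2 := by positivity
      linarith
  have hkey : 4 * A ^ 2 * c ^ 4
      ≤ ((2 * x * c) ^ 2 + (A * y * c + B * x * s) ^ 2)
        * ((A ^ 2 + 4) * c ^ 2 + B ^ 2 * s ^ 2) := by
    have hid : ((2 * x * c) ^ 2 + (A * y * c + B * x * s) ^ 2)
        * ((A ^ 2 + 4) * c ^ 2 + B ^ 2 * s ^ 2)
        - 4 * A ^ 2 * c ^ 4 * (x ^ 2 + y ^ 2)
        = ((4 * c ^ 2 + B ^ 2 * s ^ 2) * x + A * B * c * s * y) ^ 2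
          + (A * B * c * s * x + A ^ 2 * c ^ 2 * y) ^ 2 := by ring
    rw [hxy, mul_one] at hid
    linarith [sq_nonneg ((4 * c ^ 2 + B ^ 2 * s ^ 2) * x + A * B * c * s * y),
      sq_nonneg (A * B * c * s * x + A ^ 2 * c ^ 2 * y)]
  have hQ : 4 * A ^ 2 * c ^ 4 / ((A ^ 2 + 4) * c ^ 2 + B ^ 2 * s ^ 2)
      ≤ (2 * x * c) ^ 2 + (A * y * c + B * x * s) ^ 2 :=
    (div_le_iff₀ hT).mpr hkey
  calc ρ₀ ^ 2 * (4 * A ^ 2 * c ^ 4) / ((A ^ 2 + 4) * c ^ 2 + B ^ 2 * s ^ 2)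
      = ρ₀ ^ 2 * (4 * A ^ 2 * c ^ 4 / ((A ^ 2 + 4) * c ^ 2 + B ^ 2 * s ^ 2)) := by
        ring
    _ ≤ ρ₀ ^ 2 * ((2 * x * c) ^ 2 + (A * y * c + B * x * s) ^ 2) :=
        mul_le_mul_of_nonneg_left hQ (sq_nonneg ρ₀)
    _ = (ρ₀ * (2 * x * c)) ^ 2 + (ρ₀ * (A * y * c + B * x * s)) ^ 2 := by ring
    _ = (ρ₀ * (Real.sin (↑τ * θ) + Real.sin (↑σ * θ))) ^ 2
        + (ρ₀ * (Real.sqrt ((τ:ℝ)/σ) * Real.cos (↑τ * θ)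
            + Real.sqrt ((σ:ℝ)/τ) * Real.cos (↑σ * θ))) ^ 2 := by
        rw [hq, hp]
end

section
/- Let τ > σ ≥ 1 be natural numbers and ρ₀ ≠ 0 a real number. Define q̇(θ) = ρ₀(√(τ/σ)·cos(τθ) + √(σ/τ)·cos(σθ)). Then there is no θ ∈ ℝ at which both q̇(θ) = 0 and q̇'(θ) = 0, where q̇'(θ) = −ρ₀(τ·√(τ/σ)·sin(τθ) + σ·√(σ/τ)·sin(σθ)) is the derivative of q̇; i.e., every zero of q̇ is simple. -/
/-!
At a double zero, `√(τ/σ) cos τθ = -√(σ/τ) cos σθ` and `τ √(τ/σ) sin τθ = -σ √(σ/τ) sin σθ`.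
Since `σ ≤ τ`, squaring and adding gives `τ/σ ≤ (σ/τ)(cos² σθ + sin² σθ) = σ/τ`, contradicting `σ < τ`.
-/

open Real

theorem sq_le_sq_of_mul_cos_add_eq_zero_of_mul_sin_add_eq_zero {a b p q x y : ℝ}
    (hp : p ≠ 0) (hqp : q ^ 2 ≤ p ^ 2)
    (hcos : a * cos x + b * cos y = 0) (hsin : p * a * sin x + q * b * sin y = 0) :
    a ^ 2 ≤ b ^ 2 := by
  have hcos' : (a * cos x) ^ 2 = (b * cos y) ^ 2 := by rw [eq_neg_of_add_eq_zero_left hcos, neg_sq]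
  have hsin' : p ^ 2 * (a * sin x) ^ 2 = q ^ 2 * (b * sin y) ^ 2 := by
    linear_combination (p * a * sin x - q * b * sin y) * hsin
  have hsin_le : (a * sin x) ^ 2 ≤ (b * sin y) ^ 2 := by
    refine le_of_mul_le_mul_left ?_ (pow_pos (abs_pos.mpr hp) 2)
    rw [sq_abs, hsin']
    exact mul_le_mul_of_nonneg_right hqp (sq_nonneg _)
  calc a ^ 2 = (a * cos x) ^ 2 + (a * sin x) ^ 2 := by
        linear_combination -a ^ 2 * cos_sq_add_sin_sq x
    _ ≤ (b * cos y) ^ 2 + (b * sin y) ^ 2 := by rw [hcos']; gcongr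
    _ = b ^ 2 := by linear_combination b ^ 2 * cos_sq_add_sin_sq y

/-- Every zero of the resonant Lissajous velocity
`q̇(θ) = ρ₀(√(τ/σ) cos τθ + √(σ/τ) cos σθ)` is simple. -/
theorem resonant_lissajous_velocity_zeros_simple
    (τ σ : ℕ) (hσ : 1 ≤ σ) (hτσ : σ < τ) (ρ₀ : ℝ) (hρ₀ : ρ₀ ≠ 0) :
    ¬ ∃ θ : ℝ,
        ρ₀ * (Real.sqrt ((τ : ℝ) / σ) * Real.cos (τ * θ)
            + Real.sqrt ((σ : ℝ) / τ) * Real.cos (σ * θ)) = 0 ∧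
        -(ρ₀ * ((τ : ℝ) * Real.sqrt ((τ : ℝ) / σ) * Real.sin (τ * θ)
            + (σ : ℝ) * Real.sqrt ((σ : ℝ) / τ) * Real.sin (σ * θ))) = 0 := by
  rintro ⟨θ, hq, hq'⟩
  have hσ0 : (0 : ℝ) < σ := Nat.cast_pos.mpr hσ
  have hστ : (σ : ℝ) < τ := by exact_mod_cast hτσ
  have hτ0 : (0 : ℝ) < τ := hσ0.trans hστ
  have hsq := sq_le_sq_of_mul_cos_add_eq_zero_of_mul_sin_add_eq_zero hτ0.ne'
    (pow_le_pow_left₀ hσ0.le hστ.le 2) ((mul_eq_zero.mp hq).resolve_left hρ₀)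
    ((mul_eq_zero.mp (neg_eq_zero.mp hq')).resolve_left hρ₀)
  rw [sq_sqrt (by positivity), sq_sqrt (by positivity)] at hsq
  have hlt : (σ : ℝ) / τ < τ / σ := by
    rw [div_lt_div_iff₀ hτ0 hσ0]
    exact mul_self_lt_mul_self hσ0.le hστ
  linarith
end

section
/- Let τ > σ ≥ 1 be natural numbers, set a = τ + σ, b = τ − σ, x = b/a, and let ρ₀ ≠ 0. Fix k ∈ ℤ and set μ = π/2 − kπx. Let θ ∈ ℝ and put u = (a/2)·θ − kπ. Assume cos((a/2)·θ) ≠ 0 and sin((b/2)·θ) ≠ 0. Then q̇(θ) = ρ₀(√(τ/σ)·cos(τθ) + √(σ/τ)·cos(σθ)) = 0 if and only if x·tan(u) = tan(μ − x·u). -/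
open Real

/-! Write `α = (a/2)θ` and `β = (b/2)θ`, so that `τθ = α + β` and `σθ = α - β`. Clearing the
factor `√(τσ)`, the velocity vanishes iff `τ cos(α + β) + σ cos(α - β) = 0`, that is
`a cos α cos β = b sin α sin β`, which for `cos α ≠ 0 ≠ sin β` reads `x tan α = cot β`.
Finally `tan u = tan α` by `π`-periodicity, and `μ - x u = π/2 - β` turns `cot β` into
`tan (μ - x u)`. -/

lemma sqrt_div_mul_add_sqrt_div_mul_eq_zero_iff {p q : ℝ} (hp : 0 < p) (hq : 0 < q) (y z : ℝ) :
    √(p / q) * y + √(q / p) * z = 0 ↔ p * y + q * z = 0 := by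
  have hsp : 0 < √p := sqrt_pos.mpr hp
  have hsq : 0 < √q := sqrt_pos.mpr hq
  have hscaled : (√(p / q) * y + √(q / p) * z) * (√p * √q) = p * y + q * z := by
    rw [sqrt_div hp.le, sqrt_div hq.le]
    field_simp
    rw [sq_sqrt hp.le, sq_sqrt hq.le]
    ring
  rw [← hscaled, mul_eq_zero, or_iff_left (by positivity)]

lemma mul_cos_add_add_mul_cos_sub (p q α β : ℝ) :
    p * cos (α + β) + q * cos (α - β)
      = (p + q) * cos α * cos β - (p - q) * sin α * sin β := by
  rw [cos_add, cos_sub]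
  ring

lemma mul_cos_mul_cos_sub_mul_sin_mul_sin_eq_zero_iff {a b α β : ℝ} (ha : a ≠ 0)
    (hα : cos α ≠ 0) (hβ : sin β ≠ 0) :
    a * cos α * cos β - b * sin α * sin β = 0 ↔ b / a * tan α = tan (π / 2 - β) := by
  rw [tan_pi_div_two_sub, tan_eq_sin_div_cos, tan_eq_sin_div_cos, inv_div,
    div_mul_div_comm, div_eq_div_iff (mul_ne_zero ha hα) hβ, sub_eq_zero]
  constructor <;> intro h <;> linarith

/-- Reduction of the extremum condition `q̇(θ) = 0` to the scalar equation
`x tan u = tan(μ − x u)` in the shifted fast phase `u = (a/2)θ − kπ`. -/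
theorem resonant_velocity_zero_iff_reduced
    (τ σ : ℕ) (hσ : 1 ≤ σ) (hτσ : σ < τ) (ρ₀ : ℝ) (hρ₀ : ρ₀ ≠ 0)
    (a b x : ℝ)
    (ha : a = (τ : ℝ) + σ) (hb : b = (τ : ℝ) - σ) (hx : x = b / a)
    (k : ℤ) (μ : ℝ) (hμ : μ = π / 2 - k * π * x)
    (θ u : ℝ) (hu : u = (a / 2) * θ - k * π)
    (hcos : Real.cos ((a / 2) * θ) ≠ 0)
    (hsin : Real.sin ((b / 2) * θ) ≠ 0) :
    ρ₀ * (Real.sqrt ((τ : ℝ) / σ) * Real.cos (τ * θ)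
        + Real.sqrt ((σ : ℝ) / τ) * Real.cos (σ * θ)) = 0
      ↔ x * Real.tan u = Real.tan (μ - x * u) := by
  have hσ0 : (0 : ℝ) < σ := Nat.cast_pos.mpr hσ
  have hτ0 : (0 : ℝ) < τ := Nat.cast_pos.mpr (by omega)
  have ha0 : a ≠ 0 := by rw [ha]; positivity
  have hτθ : (τ : ℝ) * θ = a / 2 * θ + b / 2 * θ := by rw [ha, hb]; ring
  have hσθ : (σ : ℝ) * θ = a / 2 * θ - b / 2 * θ := by rw [ha, hb]; ring
  have htan : tan u = tan (a / 2 * θ) := by rw [hu, tan_sub_int_mul_pi]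
  have hphase : μ - x * u = π / 2 - b / 2 * θ := by
    rw [hμ, hu, hx]
    field_simp
    ring
  rw [mul_eq_zero, or_iff_right hρ₀, sqrt_div_mul_add_sqrt_div_mul_eq_zero_iff hτ0 hσ0,
    hτθ, hσθ, mul_cos_add_add_mul_cos_sub, ← ha, ← hb,
    mul_cos_mul_cos_sub_mul_sin_mul_sin_eq_zero_iff ha0 hcos hsin, htan, hphase, hx]
end

section
/- Let x be a real number with 0 < x ≤ 1/4, let u ∈ ℝ with |u| ≤ π/2, and let μ ∈ ℝ with |μ| ≤ πx/2. Then the first-order Taylor remainder of tan at μ with increment −x·u satisfies |tan(μ − x·u) − tan(μ) + x·u·sec²(μ)| ≤ π³·x³. -/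
/-!
Write `h = x·u`, so `|μ|, |h| ≤ H := πx/2 ≤ π/8`. Clearing denominators turns the remainder into
`(cos μ (h cos h − sin h) + h sin μ sin h) / (cos (μ − h) cos² μ)`. Both summands of the numerator are
cubic in `H` (the first by the Taylor expansions of `sin` and `cos`, the second as `|h|²|μ|`), so the
numerator is at most `3H³/2`, while the denominator is at least `(2/3)³` because `|μ − h| ≤ π/4`.
-/

open Real

theorem abs_sin_sub_mul_cos_le {t : ℝ} (ht : |t| ≤ 1) :
    |sin t - t * cos t| ≤ |t| ^ 3 / 2 := by
  have hsin := sin_bound ht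
  have hcos := cos_bound ht
  have htcos : |t * (cos t - (1 - t ^ 2 / 2))| ≤ |t| ^ 5 * (5 / 96) := by
    rw [abs_mul]
    calc |t| * |cos t - (1 - t ^ 2 / 2)| ≤ |t| * (|t| ^ 4 * (5 / 96)) := by gcongr
      _ = |t| ^ 5 * (5 / 96) := by ring
  have hcube : |t ^ 3 / 3| = |t| ^ 3 / 3 := by
    rw [abs_div, abs_pow, abs_of_pos (by norm_num : (0 : ℝ) < 3)]
  have hdecomp : sin t - t * cos t =
      t ^ 3 / 3 + (sin t - (t - t ^ 3 / 6)) - t * (cos t - (1 - t ^ 2 / 2)) := by ring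
  have hpow : |t| ^ 5 ≤ |t| ^ 3 := pow_le_pow_of_le_one (abs_nonneg t) ht (by norm_num)
  rw [hdecomp]
  calc _ ≤ |t ^ 3 / 3 + (sin t - (t - t ^ 3 / 6))| + |t * (cos t - (1 - t ^ 2 / 2))| := abs_sub _ _
    _ ≤ |t ^ 3 / 3| + |sin t - (t - t ^ 3 / 6)| + |t * (cos t - (1 - t ^ 2 / 2))| := by
        gcongr; exact abs_add_le _ _
    _ ≤ |t| ^ 3 / 3 + |t| ^ 5 / 100 + |t| ^ 5 * (5 / 96) := by rw [hcube]; gcongr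
    _ ≤ |t| ^ 3 / 2 := by nlinarith [pow_nonneg (abs_nonneg t) 5]

theorem two_thirds_le_cos {t : ℝ} (ht : |t| ≤ π / 4) : 2 / 3 ≤ cos t := by
  have hsq : t ^ 2 ≤ (π / 4) ^ 2 := sq_le_sq' (abs_le.1 ht).1 (abs_le.1 ht).2
  nlinarith [one_sub_sq_div_two_le_cos (x := t), pi_lt_d2, pi_pos]

theorem tan_sub_sub_tan_add_mul_sec_sq {a h : ℝ} (ha : cos a ≠ 0) (hah : cos (a - h) ≠ 0) :
    tan (a - h) - tan a + h * (1 / cos a) ^ 2 =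
      (cos a * (h * cos h - sin h) + h * sin a * sin h) / (cos (a - h) * cos a ^ 2) := by
  rw [tan_eq_sin_div_cos, tan_eq_sin_div_cos]
  field_simp
  rw [sin_sub, cos_sub]
  linear_combination (-cos a * sin h) * sin_sq_add_cos_sq a

theorem abs_tan_sub_sub_tan_add_mul_sec_sq_le {a h H : ℝ} (hH : H ≤ π / 8)
    (ha : |a| ≤ H) (hh : |h| ≤ H) :
    |tan (a - h) - tan a + h * (1 / cos a) ^ 2| ≤ 81 / 16 * H ^ 3 := by
  have hH0 : 0 ≤ H := (abs_nonneg a).trans ha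
  have hH1 : H ≤ 1 := hH.trans (by linarith [pi_lt_d2])
  have hcos_a : 2 / 3 ≤ cos a := two_thirds_le_cos (by linarith)
  have hcos_ah : 2 / 3 ≤ cos (a - h) :=
    two_thirds_le_cos ((abs_sub _ _).trans (by linarith))
  have hnum : |cos a * (h * cos h - sin h) + h * sin a * sin h| ≤ 3 / 2 * H ^ 3 := by
    have hcube : |sin h - h * cos h| ≤ H ^ 3 / 2 :=
      (abs_sin_sub_mul_cos_le (hh.trans hH1)).trans (by gcongr)
    calc _ ≤ |cos a * (h * cos h - sin h)| + |h * sin a * sin h| := abs_add_le _ _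
      _ = |cos a| * |sin h - h * cos h| + |h| * |sin a| * |sin h| := by
          rw [abs_mul, abs_mul, abs_mul, ← abs_neg (h * cos h - sin h), neg_sub]
      _ ≤ 1 * (H ^ 3 / 2) + H * H * H := by
          gcongr
          exacts [abs_cos_le_one a, abs_sin_le_abs.trans ha, abs_sin_le_abs.trans hh]
      _ = 3 / 2 * H ^ 3 := by ring
  have hden : (2 / 3) ^ 3 ≤ cos (a - h) * cos a ^ 2 := by
    calc (2 / 3 : ℝ) ^ 3 = 2 / 3 * (2 / 3) ^ 2 := by ring
      _ ≤ _ := by gcongr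
  have hden0 : 0 < cos (a - h) * cos a ^ 2 := by positivity
  rw [tan_sub_sub_tan_add_mul_sec_sq (by positivity) (by positivity), abs_div,
    abs_of_pos hden0, div_le_iff₀ hden0]
  nlinarith [pow_nonneg hH0 3]

/-- Uniform bound on the first-order Taylor remainder of `tan` at `μ` with
increment `−x·u`: `|tan(μ − xu) − tan μ + xu·sec²μ| ≤ π³x³`. -/
theorem tan_taylor_remainder_bound
    (x u μ : ℝ) (hx : 0 < x) (hx' : x ≤ 1/4)
    (hu : |u| ≤ π / 2) (hμ : |μ| ≤ π * x / 2) :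
    |Real.tan (μ - x * u) - Real.tan μ + x * u * (1 / Real.cos μ)^2|
      ≤ π^3 * x^3 := by
  have hxu : |x * u| ≤ π * x / 2 := by
    rw [abs_mul, abs_of_pos hx]
    nlinarith
  have hH : π * x / 2 ≤ π / 8 := by nlinarith [pi_pos]
  calc _ ≤ 81 / 16 * (π * x / 2) ^ 3 := abs_tan_sub_sub_tan_add_mul_sec_sq_le hH hμ hxu
    _ ≤ π ^ 3 * x ^ 3 := by nlinarith [pow_pos (mul_pos pi_pos hx) 3]
end
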